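/- Pattern mixture representation: Under CCMV, the full-data law satisfies, for all l, P(L = l) = Σ_r P(L_{(-r)} = l_{(-r)} | R = 1, L_{(r)} = l_{(r)}) · P(L_{(r)} = l_{(r)} | R = r) · P(R = r), where for r = 1 the first factor is interpreted as 1 (pattern 1 observes everything). -/

import Mathlib

open Finset MeasureTheory

open Classical in
noncomputable def pr {Ω : Type*} [Fintype Ω] (P : Ω → ℝ) (E : Ω → Prop) : ℝ :=
  ∑ ω, if E ω then P ω else 0

noncomputable def cpr {Ω : Type*} [Fintype Ω] (P : Ω → ℝ) (E F : Ω → Prop) : ℝ :=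
  pr P (fun ω => E ω ∧ F ω) / pr P F

noncomputable def ex {Ω : Type*} [Fintype Ω] (P : Ω → ℝ) (U : Ω → ℝ) : ℝ :=
  ∑ ω, P ω * U ω

open Classical in
noncomputable def cex {Ω : Type*} [Fintype Ω] (P : Ω → ℝ) (U : Ω → ℝ) (F : Ω → Prop) : ℝ :=
  (∑ ω, if F ω then P ω * U ω else 0) / pr P F

/-!
Split `P(L = l)` according to the missingness pattern. For `r ≠ 0` the event `L = l` is
`L_(r) = l_(r) ∧ L_(-r) = l_(-r)`, so `P(R = r, L = l)` factors as
`P(L_(-r) = l_(-r) | R = r, L_(r) = l_(r)) · P(L_(r) = l_(r) | R = r) · P(R = r)`,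
and CCMV replaces the conditioning pattern `r` by the complete-case pattern `0`. CCMV only
applies when both conditioning events have positive mass; if `P(R = r, L_(r) = l_(r)) = 0`
the term vanishes anyway, and otherwise positivity of `R = 0` given `L` makes
`P(R = 0, L_(r) = l_(r))` positive as well.
-/

section FiniteProbability

variable {Ω : Type*} [Fintype Ω] {P : Ω → ℝ}

lemma pr_congr (P : Ω → ℝ) {E F : Ω → Prop} (h : ∀ ω, E ω ↔ F ω) : pr P E = pr P F :=
  congrArg (pr P) (funext fun ω => propext (h ω))

lemma pr_nonneg (hP : ∀ ω, 0 ≤ P ω) (E : Ω → Prop) : 0 ≤ pr P E :=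
  Finset.sum_nonneg fun ω _ => by split_ifs; exacts [hP ω, le_rfl]

lemma pr_mono (hP : ∀ ω, 0 ≤ P ω) {E F : Ω → Prop} (h : ∀ ω, E ω → F ω) :
    pr P E ≤ pr P F :=
  Finset.sum_le_sum fun ω _ => by
    split_ifs with hE hF
    exacts [le_rfl, absurd (h ω hE) hF, hP ω, le_rfl]

lemma exists_pos_of_pr_pos {E : Ω → Prop} (h : 0 < pr P E) : ∃ ω, E ω ∧ 0 < P ω := by
  obtain ⟨ω, -, hω⟩ := Finset.exists_lt_of_sum_lt (by simpa using h : ∑ _ω : Ω, (0 : ℝ) < pr P E)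
  split_ifs at hω with hE
  · exact ⟨ω, hE, hω⟩
  · exact absurd hω (lt_irrefl 0)

lemma pr_pos_of_pos (hP : ∀ ω, 0 ≤ P ω) {E : Ω → Prop} {ω : Ω} (hE : E ω) (hω : 0 < P ω) :
    0 < pr P E := by
  classical
  refine hω.trans_le ?_
  unfold pr
  convert Finset.single_le_sum (f := fun ω => if E ω then P ω else 0)
    (fun ω _ => by split_ifs; exacts [hP ω, le_rfl]) (Finset.mem_univ ω)
  simp [hE]

lemma pr_eq_sum_pr_and {β : Type*} [Fintype β] (P : Ω → ℝ) (X : Ω → β) (E : Ω → Prop) :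
    pr P E = ∑ x, pr P (fun ω => X ω = x ∧ E ω) := by
  classical
  unfold pr
  rw [Finset.sum_comm]
  refine Finset.sum_congr rfl fun ω _ => ?_
  by_cases hE : E ω <;> simp [hE]

-- No positivity of `pr P F` is needed: if it vanishes, both sides are `0` (as `x / 0 = 0`).
lemma cpr_mul_pr (hP : ∀ ω, 0 ≤ P ω) (E F : Ω → Prop) :
    cpr P E F * pr P F = pr P (fun ω => E ω ∧ F ω) := by
  unfold cpr
  rcases (pr_nonneg hP F).eq_or_lt with hF | hF
  · rw [← hF, mul_zero]
    exact (le_antisymm (hF ▸ pr_mono hP fun _ h => h.2) (pr_nonneg hP _)).symm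
  · exact div_mul_cancel₀ _ hF.ne'

lemma pr_and_comp_pos {A B : Type*} (hP : ∀ ω, 0 ≤ P ω) {G : Ω → Prop} {L : Ω → A}
    (hpos : ∀ l, 0 < pr P (fun ω => L ω = l) → 0 < pr P (fun ω => G ω ∧ L ω = l))
    (f : A → B) {b : B} (h : 0 < pr P (fun ω => f (L ω) = b)) :
    0 < pr P (fun ω => G ω ∧ f (L ω) = b) := by
  obtain ⟨ω, hb, hω⟩ := exists_pos_of_pr_pos h
  exact (hpos (L ω) (pr_pos_of_pos hP rfl hω)).trans_le
    (pr_mono hP fun _ ⟨hG, hl⟩ => ⟨hG, hl ▸ hb⟩)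

lemma pr_and_eq_of_ccmv {A B C : Type*} (hP : ∀ ω, 0 ≤ P ω) {G G₀ : Ω → Prop} {L : Ω → A}
    {O : A → B} {M : A → C} (hpart : ∀ l l', O l = O l' → M l = M l' → l = l')
    (hpos : ∀ l, 0 < pr P (fun ω => L ω = l) → 0 < pr P (fun ω => G₀ ω ∧ L ω = l))
    (hccmv : ∀ a b, 0 < pr P (fun ω => G ω ∧ O (L ω) = b) →
      0 < pr P (fun ω => G₀ ω ∧ O (L ω) = b) →
      cpr P (fun ω => M (L ω) = a) (fun ω => G ω ∧ O (L ω) = b) =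
        cpr P (fun ω => M (L ω) = a) (fun ω => G₀ ω ∧ O (L ω) = b))
    (l : A) :
    pr P (fun ω => G ω ∧ L ω = l) =
      cpr P (fun ω => M (L ω) = M l) (fun ω => G₀ ω ∧ O (L ω) = O l) *
        (cpr P (fun ω => O (L ω) = O l) G * pr P G) := by
  have hsplit : pr P (fun ω => G ω ∧ L ω = l) =
      cpr P (fun ω => M (L ω) = M l) (fun ω => G ω ∧ O (L ω) = O l) *
        pr P (fun ω => G ω ∧ O (L ω) = O l) := by
    rw [cpr_mul_pr hP]
    refine pr_congr P fun ω => ⟨fun ⟨hG, hl⟩ => ⟨hl ▸ rfl, hG, hl ▸ rfl⟩, ?_⟩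
    exact fun ⟨hM, hG, hO⟩ => ⟨hG, hpart _ _ hO hM⟩
  have hobserved : cpr P (fun ω => O (L ω) = O l) G * pr P G =
      pr P (fun ω => G ω ∧ O (L ω) = O l) := by
    rw [cpr_mul_pr hP]
    exact pr_congr P fun _ => and_comm
  rw [hsplit, hobserved]
  rcases (pr_nonneg hP (fun ω => G ω ∧ O (L ω) = O l)).eq_or_lt with hzero | hG
  · rw [← hzero, mul_zero, mul_zero]
  · have hG₀ := pr_and_comp_pos hP hpos O (hG.trans_le (pr_mono hP fun _ h => h.2))
    rw [hccmv _ _ hG hG₀]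

end FiniteProbability

theorem stmt15_general {Ω A : Type*} [Fintype Ω] {J : ℕ} {B C : Fin (J + 1) → Type*}
    (P : Ω → ℝ) (hP : ∀ ω, 0 ≤ P ω)
    (R : Ω → Fin (J + 1)) (L : Ω → A)
    (O : (r : Fin (J + 1)) → A → B r) (M : (r : Fin (J + 1)) → A → C r)
    (hpart : ∀ (r : Fin (J + 1)) (l l' : A), O r l = O r l' → M r l = M r l' → l = l')
    (hpos : ∀ l : A, 0 < pr P (fun ω => L ω = l) →
      0 < pr P (fun ω => R ω = 0 ∧ L ω = l))
    (hCCMV : ∀ r, r ≠ 0 → ∀ (a : C r) (b : B r),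
      0 < pr P (fun ω => R ω = r ∧ O r (L ω) = b) →
      0 < pr P (fun ω => R ω = 0 ∧ O r (L ω) = b) →
      cpr P (fun ω => M r (L ω) = a) (fun ω => R ω = r ∧ O r (L ω) = b) =
        cpr P (fun ω => M r (L ω) = a) (fun ω => R ω = 0 ∧ O r (L ω) = b)) :
    ∀ l : A,
      pr P (fun ω => L ω = l) =
        pr P (fun ω => R ω = 0 ∧ L ω = l) +
        ∑ r ∈ Finset.univ.erase (0 : Fin (J + 1)),
          cpr P (fun ω => M r (L ω) = M r l)
              (fun ω => R ω = 0 ∧ O r (L ω) = O r l) *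
            (cpr P (fun ω => O r (L ω) = O r l) (fun ω => R ω = r) *
              pr P (fun ω => R ω = r)) := by
  intro l
  rw [pr_eq_sum_pr_and P R, ← Finset.add_sum_erase _ _ (Finset.mem_univ 0)]
  refine congrArg _ (Finset.sum_congr rfl fun r hr => ?_)
  exact pr_and_eq_of_ccmv (G₀ := fun ω => R ω = 0) hP (hpart r) hpos
    (hCCMV r (Finset.ne_of_mem_erase hr)) l

/-- Pattern-mixture representation under CCMV: for all `l`,
`P(L = l) = Σ_r P(L_(-r) = l_(-r) | R=1, L_(r) = l_(r)) · P(L_(r) = l_(r) | R=r) · P(R=r)`,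
where for the complete-case pattern (here `r = 0`, which observes everything) the first
factor is 1 so that the `r = 0` term is `P(R=0, L=l)`. -/
theorem stmt15 {Ω A : Type*} [Fintype Ω] {J : ℕ} {B C : Fin (J + 1) → Type*}
    (P : Ω → ℝ) (hP : ∀ ω, 0 ≤ P ω) (hPsum : ∑ ω, P ω = 1)
    (R : Ω → Fin (J + 1)) (L : Ω → A)
    (O : (r : Fin (J + 1)) → A → B r) (M : (r : Fin (J + 1)) → A → C r)
    (hpart : ∀ (r : Fin (J + 1)) (l l' : A), O r l = O r l' → M r l = M r l' → l = l')
    (hpos : ∀ l : A, 0 < pr P (fun ω => L ω = l) →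
      0 < pr P (fun ω => R ω = 0 ∧ L ω = l))
    (hCCMV : ∀ r, r ≠ 0 → ∀ (a : C r) (b : B r),
      0 < pr P (fun ω => R ω = r ∧ O r (L ω) = b) →
      0 < pr P (fun ω => R ω = 0 ∧ O r (L ω) = b) →
      cpr P (fun ω => M r (L ω) = a) (fun ω => R ω = r ∧ O r (L ω) = b) =
        cpr P (fun ω => M r (L ω) = a) (fun ω => R ω = 0 ∧ O r (L ω) = b)) :
    ∀ l : A,
      pr P (fun ω => L ω = l) =
        pr P (fun ω => R ω = 0 ∧ L ω = l) +
        ∑ r ∈ Finset.univ.erase (0 : Fin (J + 1)),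
          cpr P (fun ω => M r (L ω) = M r l)
              (fun ω => R ω = 0 ∧ O r (L ω) = O r l) *
            (cpr P (fun ω => O r (L ω) = O r l) (fun ω => R ω = r) *
              pr P (fun ω => R ω = r)) :=
  stmt15_general P hP R L O M hpart hpos hCCMV
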